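/- Fix ε ∈ (0,1) and M > 0. There exist one-dimensional Gaussian measures P = N(0,1) and Q = N(0, σ²) (with σ² = ε^{2m} for m sufficiently large) such that the squared L²(P)-errors R(T_ε) = ((ε^{2m} + ε²/4)^{1/2} − ε/2 + ε^m)² and R(T_ε^D) = ((ε^{2m} + ε²/4)^{1/2} + 1 − ε^m − (1+ε²/4)^{1/2})² satisfy R(T_ε^D) ≥ M · R(T_ε). -/
import Mathlib

private lemma aux_arith (M c t A B : ℝ) (hM : 0 < M) (ht0 : 0 < t) (ht1 : t < 1)
    (hc0 : 0 < c) (htM : t * (16 * M) < c ^ 2) (hA : c / 2 ≤ A)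
    (hB0 : 0 ≤ B) (hB : B ≤ 2 * t) : M * B ^ 2 ≤ A ^ 2 := by
  have h1 : M * B ^ 2 ≤ M * (2 * t) ^ 2 :=
    mul_le_mul_of_nonneg_left (pow_le_pow_left₀ hB0 hB 2) hM.le
  have hts : M * t ^ 2 ≤ M * t := mul_le_mul_of_nonneg_left (by nlinarith) hM.le
  have h2 : M * (2 * t) ^ 2 ≤ c ^ 2 / 4 := by nlinarith
  have h3 : (c / 2) ^ 2 ≤ A ^ 2 := pow_le_pow_left₀ (by linarith) hA 2
  nlinarith

/-- Fix `ε ∈ (0,1)` and `M > 0`. There exists `σ² = ε^{2m}` (for `m` large) such that the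
squared `L²(P)`-errors of the entropic map and the debiased (Sinkhorn) map between
`P = N(0,1)` and `Q = N(0,σ²)`, given in closed form by
`R(T_ε) = ((ε^{2m} + ε²/4)^{1/2} − ε/2 + ε^m)²` and
`R(T_ε^D) = ((ε^{2m} + ε²/4)^{1/2} + 1 − ε^m − (1+ε²/4)^{1/2})²`,
satisfy `R(T_ε^D) ≥ M · R(T_ε)`. -/
theorem stmt_4 (ε M : ℝ) (hε0 : 0 < ε) (hε1 : ε < 1) (hM : 0 < M) :
    ∃ m : ℕ, 0 < m ∧
      M * (Real.sqrt (ε ^ (2 * m) + ε ^ 2 / 4) - ε / 2 + ε ^ m) ^ 2 ≤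
        (Real.sqrt (ε ^ (2 * m) + ε ^ 2 / 4) + 1 - ε ^ m - Real.sqrt (1 + ε ^ 2 / 4)) ^ 2 := by
  have hr1 : 1 ≤ Real.sqrt (1 + ε ^ 2 / 4) := by
    have h1 := Real.sq_sqrt (show (0:ℝ) ≤ 1 + ε ^ 2 / 4 by positivity)
    have h2 := Real.sqrt_nonneg (1 + ε ^ 2 / 4)
    nlinarith
  have hrlt : Real.sqrt (1 + ε ^ 2 / 4) < 1 + ε / 2 := by
    rw [show (1:ℝ) + ε / 2 = Real.sqrt ((1 + ε / 2) ^ 2) by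
      rw [Real.sqrt_sq (by linarith)]]
    exact Real.sqrt_lt_sqrt (by nlinarith) (by nlinarith)
  obtain ⟨r, hr⟩ : ∃ r : ℝ, r = Real.sqrt (1 + ε ^ 2 / 4) := ⟨_, rfl⟩
  rw [← hr] at hr1 hrlt ⊢
  set c : ℝ := ε / 2 + 1 - r with hc
  have hc0 : 0 < c := by simp only [hc]; linarith
  have hδ0 : 0 < min (c / 2) (c ^ 2 / (16 * M)) :=
    lt_min (by linarith) (by positivity)
  obtain ⟨m, hm⟩ := exists_pow_lt_of_lt_one hδ0 hε1
  have hδ1 : min (c / 2) (c ^ 2 / (16 * M)) < 1 :=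
    lt_of_le_of_lt (min_le_left _ _) (by linarith)
  have hmpos : 0 < m := by
    rcases Nat.eq_zero_or_pos m with h | h
    · exfalso; rw [h, pow_zero] at hm; linarith
    · exact h
  refine ⟨m, hmpos, ?_⟩
  have ht0 : 0 < ε ^ m := pow_pos hε0 m
  have ht1 : ε ^ m < 1 := lt_trans hm hδ1
  have htc : ε ^ m < c / 2 := lt_of_lt_of_le hm (min_le_left _ _)
  have htM : ε ^ m * (16 * M) < c ^ 2 := by
    have := lt_of_lt_of_le hm (min_le_right _ _)
    rw [lt_div_iff₀ (by positivity)] at this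
    exact this
  have hpow : ε ^ (2 * m) = (ε ^ m) ^ 2 := by rw [pow_mul']
  rw [hpow]
  have hs_le : Real.sqrt ((ε ^ m) ^ 2 + ε ^ 2 / 4) ≤ ε ^ m + ε / 2 := by
    rw [show ε ^ m + ε / 2 = Real.sqrt ((ε ^ m + ε / 2) ^ 2) by
      rw [Real.sqrt_sq (by positivity)]]
    exact Real.sqrt_le_sqrt (by nlinarith)
  have hs_ge : ε / 2 ≤ Real.sqrt ((ε ^ m) ^ 2 + ε ^ 2 / 4) := by
    rw [show ε / 2 = Real.sqrt ((ε / 2) ^ 2) by rw [Real.sqrt_sq (by linarith)]]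
    exact Real.sqrt_le_sqrt (by nlinarith)
  apply aux_arith M c (ε ^ m) _ _ hM ht0 ht1 hc0 htM
  · simp only [hc]; linarith
  · linarith
  · linarith
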